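/- arXiv:2003.08259 — 4 statements merged into one kernel-verified Lean document; each statement's English description precedes it below -/
import Mathlib

section
/- Let X be a real n×d matrix with full column rank, Q = (1/n)X^T X with λ_min(Q) ≥ c₁ > 0, and f ∈ ℝⁿ. If (1/n)·f^T(I - (1/n)X Q^{-1} X^T)f ≥ c₂ > 0, then the smallest eigenvalue of the block matrix G = [[Q, (1/n)X^T f], [(1/n)f^T X, (1/n)‖f‖₂²]] is bounded below by a positive constant depending only on c₁, c₂, and an upper bound on the entries of G. -/
/-!
Write `v = (w, t)`, `b = Xᵀf/n`, `s = ‖f‖²/n` and `z = Q⁻¹b`. Completing the square gives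
`vᵀGv = uᵀQu + t²(s - bᵀz)` with `u = w + t z`, and the Schur complement `s - bᵀz` is exactly
`fᵀFf/n ≥ c₂`. Moreover `c₁‖z‖² ≤ zᵀQz = bᵀz ≤ s ≤ M`, so passing from `w` to `u` costs a
controlled amount: `‖w‖² ≤ 2‖u‖² + 2t²M/c₁`. Hence `vᵀGv ≥ c₁‖u‖² + c₂t² ≥ c₃‖v‖²` with
`c₃ = min (c₁/2) (c₂/(1 + 2M/c₁))`.
-/

open Matrix

theorem Sum.eq_elim_fin_one {m α : Type*} (v : m ⊕ Fin 1 → α) :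
    v = Sum.elim (fun i => v (.inl i)) (fun _ => v (.inr 0)) := by
  ext (i | i) <;> simp [Fin.fin_one_eq_zero]

section

variable {m : Type*} [Fintype m]

theorem dotProduct_self_nonneg (v : m → ℝ) : 0 ≤ v ⬝ᵥ v :=
  Finset.sum_nonneg fun i _ => mul_self_nonneg (v i)

theorem dotProduct_add_self_le (p q : m → ℝ) :
    (p + q) ⬝ᵥ (p + q) ≤ 2 * (p ⬝ᵥ p) + 2 * (q ⬝ᵥ q) := by
  have := dotProduct_self_nonneg (p - q)
  simp only [add_dotProduct, dotProduct_add, sub_dotProduct, dotProduct_sub,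
    dotProduct_comm q p] at this ⊢
  linarith

theorem sumElim_dotProduct_self (w : m → ℝ) (t : ℝ) :
    Sum.elim w (fun _ : Fin 1 => t) ⬝ᵥ Sum.elim w (fun _ => t) = w ⬝ᵥ w + t ^ 2 := by
  simp [dotProduct, sq]

theorem sumElim_dotProduct_mulVec_fromBlocks (Q : Matrix m m ℝ) (b w : m → ℝ) (s t : ℝ) :
    Sum.elim w (fun _ : Fin 1 => t) ⬝ᵥ
        fromBlocks Q (replicateCol (Fin 1) b) (replicateRow (Fin 1) b) (of fun _ _ => s) *ᵥ
          Sum.elim w (fun _ => t) =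
      w ⬝ᵥ Q *ᵥ w + 2 * t * (b ⬝ᵥ w) + t ^ 2 * s := by
  have hcol : replicateCol (Fin 1) b *ᵥ (fun _ => t) = t • b := by
    ext; simp [mulVec, dotProduct, mul_comm]
  have hrow : replicateRow (Fin 1) b *ᵥ w = fun _ => b ⬝ᵥ w := rfl
  rw [fromBlocks_mulVec, Sum.elim_comp_inl, Sum.elim_comp_inr, sumElim_dotProduct_sumElim,
    dotProduct_add, dotProduct_add, hcol, hrow, dotProduct_smul, dotProduct_comm w b]
  simp only [dotProduct, mulVec, smul_eq_mul, Finset.univ_unique, Fin.default_eq_zero,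
    Finset.sum_const, Finset.card_singleton, one_smul, of_apply]
  ring

variable [DecidableEq m] {Q : Matrix m m ℝ}

theorem Matrix.isUnit_det_of_coercive {c : ℝ} (hc₀ : 0 < c)
    (hc : ∀ w, c * (w ⬝ᵥ w) ≤ w ⬝ᵥ Q *ᵥ w) : IsUnit Q.det := by
  rw [isUnit_iff_ne_zero, Ne, ← exists_mulVec_eq_zero_iff]
  rintro ⟨w, hw, hQw⟩
  have : w ⬝ᵥ w ≤ 0 := by
    have := hc w
    rw [hQw, dotProduct_zero] at this
    exact nonpos_of_mul_nonpos_right this hc₀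
  exact hw (dotProduct_self_eq_zero.mp (le_antisymm this (dotProduct_self_nonneg w)))

theorem Matrix.coercive_mul_dotProduct_inv_le (hQ : IsUnit Q.det) {c : ℝ}
    (hc : ∀ w, c * (w ⬝ᵥ w) ≤ w ⬝ᵥ Q *ᵥ w) (b : m → ℝ) :
    c * (Q⁻¹ *ᵥ b ⬝ᵥ Q⁻¹ *ᵥ b) ≤ b ⬝ᵥ Q⁻¹ *ᵥ b := by
  simpa [mulVec_mulVec, mul_nonsing_inv _ hQ, dotProduct_comm] using hc (Q⁻¹ *ᵥ b)

theorem Matrix.IsSymm.dotProduct_mulVec_complete_square (hQs : Q.IsSymm) (hQ : IsUnit Q.det)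
    (b w : m → ℝ) (s t : ℝ) :
    w ⬝ᵥ Q *ᵥ w + 2 * t * (b ⬝ᵥ w) + t ^ 2 * s =
      (w + t • Q⁻¹ *ᵥ b) ⬝ᵥ Q *ᵥ (w + t • Q⁻¹ *ᵥ b) + t ^ 2 * (s - b ⬝ᵥ Q⁻¹ *ᵥ b) := by
  have hQz : Q *ᵥ Q⁻¹ *ᵥ b = b := by rw [mulVec_mulVec, mul_nonsing_inv _ hQ, one_mulVec]
  have hzQ : (Q⁻¹ *ᵥ b) ᵥ* Q = b := by rw [← mulVec_transpose, hQs.eq, hQz]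
  simp only [mulVec_add, mulVec_smul, hQz, add_dotProduct, dotProduct_add, smul_dotProduct,
    dotProduct_smul, dotProduct_mulVec (Q⁻¹ *ᵥ b) Q w, hzQ, smul_eq_mul]
  rw [dotProduct_comm w b, dotProduct_comm _ b]
  ring

theorem Matrix.IsSymm.min_mul_le_quadForm_of_schur (hQs : Q.IsSymm) {c₁ c₂ M s : ℝ}
    (hc₁ : 0 < c₁) (hQc : ∀ w, c₁ * (w ⬝ᵥ w) ≤ w ⬝ᵥ Q *ᵥ w) {b : m → ℝ} (hs : s ≤ M)
    (hc₂ : 0 < c₂) (hschur : c₂ ≤ s - b ⬝ᵥ Q⁻¹ *ᵥ b) (w : m → ℝ) (t : ℝ) :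
    min (c₁ / 2) (c₂ / (1 + 2 * (M / c₁))) * (w ⬝ᵥ w + t ^ 2) ≤
      w ⬝ᵥ Q *ᵥ w + 2 * t * (b ⬝ᵥ w) + t ^ 2 * s := by
  have hQu := isUnit_det_of_coercive hc₁ hQc
  set z := Q⁻¹ *ᵥ b
  set u := w + t • z
  have hz : c₁ * (z ⬝ᵥ z) ≤ b ⬝ᵥ z := coercive_mul_dotProduct_inv_le hQu hQc b
  have hzM : z ⬝ᵥ z ≤ M / c₁ := by
    rw [le_div_iff₀ hc₁]
    linarith
  have hw : w ⬝ᵥ w ≤ 2 * (u ⬝ᵥ u) + 2 * t ^ 2 * (z ⬝ᵥ z) := by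
    have := dotProduct_add_self_le u (-t • z)
    simpa only [u, add_neg_cancel_right, neg_smul, neg_dotProduct, dotProduct_neg, neg_neg,
      smul_dotProduct, dotProduct_smul, smul_eq_mul, mul_neg, neg_mul, ← mul_assoc, sq] using this
  have hM : 0 ≤ M := by nlinarith [dotProduct_self_nonneg z]
  set c₃ := min (c₁ / 2) (c₂ / (1 + 2 * (M / c₁)))
  have hc₃ : 0 ≤ c₃ := le_min (by positivity) (div_nonneg hc₂.le (by positivity))
  have hc₃₁ : 2 * c₃ ≤ c₁ := by linarith [min_le_left (c₁ / 2) (c₂ / (1 + 2 * (M / c₁)))]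
  have hc₃₂ : c₃ * (1 + 2 * (z ⬝ᵥ z)) ≤ c₂ :=
    calc c₃ * (1 + 2 * (z ⬝ᵥ z)) ≤ c₃ * (1 + 2 * (M / c₁)) := by gcongr
      _ ≤ c₂ := (le_div_iff₀ (by positivity)).mp (min_le_right _ _)
  rw [hQs.dotProduct_mulVec_complete_square hQu]
  calc c₃ * (w ⬝ᵥ w + t ^ 2) ≤ c₃ * (2 * (u ⬝ᵥ u) + t ^ 2 * (1 + 2 * (z ⬝ᵥ z))) :=
        mul_le_mul_of_nonneg_left (by linarith) hc₃
    _ ≤ c₁ * (u ⬝ᵥ u) + t ^ 2 * c₂ := by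
        nlinarith [dotProduct_self_nonneg u, sq_nonneg t]
    _ ≤ u ⬝ᵥ Q *ᵥ u + t ^ 2 * (s - b ⬝ᵥ z) := by gcongr; exact hQc u

end

theorem dotProduct_one_sub_smul_mulVec {n d : Type*} [Fintype n] [Fintype d] [DecidableEq n]
    (a : ℝ) (X : Matrix n d ℝ) (P : Matrix d d ℝ) (f : n → ℝ) :
    a * (f ⬝ᵥ (1 - a • (X * P * Xᵀ)) *ᵥ f) =
      a * (f ⬝ᵥ f) - (a • Xᵀ *ᵥ f) ⬝ᵥ P *ᵥ (a • Xᵀ *ᵥ f) := by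
  rw [sub_mulVec, one_mulVec, smul_mulVec, ← mulVec_mulVec, ← mulVec_mulVec, dotProduct_sub,
    dotProduct_smul, dotProduct_mulVec f X, ← mulVec_transpose, mulVec_smul, smul_dotProduct,
    dotProduct_smul]
  simp only [smul_eq_mul]
  ring

theorem stmt4 (c₁ c₂ Mbd : ℝ) (hc₁ : 0 < c₁) (hc₂ : 0 < c₂) (hM : 0 < Mbd) :
    ∃ c₃ : ℝ, 0 < c₃ ∧
      ∀ (n d : ℕ) (X : Matrix (Fin n) (Fin d) ℝ) (f : Fin n → ℝ)
        (Q : Matrix (Fin d) (Fin d) ℝ) (G : Matrix (Fin d ⊕ Fin 1) (Fin d ⊕ Fin 1) ℝ),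
        0 < n →
        IsUnit (Xᵀ * X).det →
        Q = (1 / (n : ℝ)) • (Xᵀ * X) →
        G = Matrix.fromBlocks Q
          (Matrix.of fun i (_ : Fin 1) => (1 / (n : ℝ)) * (Xᵀ.mulVec f) i)
          (Matrix.of fun (_ : Fin 1) j => (1 / (n : ℝ)) * (Xᵀ.mulVec f) j)
          (Matrix.of fun (_ : Fin 1) (_ : Fin 1) => (1 / (n : ℝ)) * (f ⬝ᵥ f)) →
        (∀ w : Fin d → ℝ, c₁ * (w ⬝ᵥ w) ≤ w ⬝ᵥ Q.mulVec w) →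
        c₂ ≤ (1 / (n : ℝ)) * (f ⬝ᵥ ((1 - (1 / (n : ℝ)) • (X * Q⁻¹ * Xᵀ)).mulVec f)) →
        (∀ i j, |G i j| ≤ Mbd) →
        ∀ v : Fin d ⊕ Fin 1 → ℝ, c₃ * (v ⬝ᵥ v) ≤ v ⬝ᵥ G.mulVec v := by
  refine ⟨min (c₁ / 2) (c₂ / (1 + 2 * (Mbd / c₁))), lt_min (by positivity) (by positivity), ?_⟩
  intro n d X f Q G _ _ hQ hG hQc hSchur hGbd v
  have hQs : Q.IsSymm := by simp [hQ, IsSymm, transpose_mul]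
  have hs : 1 / (n : ℝ) * (f ⬝ᵥ f) ≤ Mbd := by
    simpa [hG] using (abs_le.mp (hGbd (.inr 0) (.inr 0))).2
  rw [dotProduct_one_sub_smul_mulVec] at hSchur
  have hG' : G = fromBlocks Q (replicateCol (Fin 1) ((1 / (n : ℝ)) • Xᵀ *ᵥ f))
      (replicateRow (Fin 1) ((1 / (n : ℝ)) • Xᵀ *ᵥ f)) (of fun _ _ => 1 / (n : ℝ) * (f ⬝ᵥ f)) :=
    hG
  rw [Sum.eq_elim_fin_one v, sumElim_dotProduct_self, hG', sumElim_dotProduct_mulVec_fromBlocks]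
  exact hQs.min_mul_le_quadForm_of_schur hc₁ hQc hs hc₂ hSchur _ _
end

section
/- Let L: ℝ^{d+1} → ℝ be a concave, twice continuously differentiable function, let (θ₀,β₀) be an interior point of a convex compact set 𝔹 ⊆ ℝ^{d+1}, and let (θ̂,β̂) be a global maximizer of L. Define (θ_t,β_t) = (1-t)(θ₀,β₀) + t(θ̂,β̂) and let D ∈ [0,1] be the largest value such that (θ_D,β_D) ∈ 𝔹. Then ‖∇L(θ₀,β₀)‖₂ ≥ D · min_{(θ,β)∈𝔹} λ_min(-H_{(θ,β)}) · ‖(θ₀-θ̂, β₀-β̂)‖₂, where H denotes the Hessian of L. -/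
/-!
Restrict `L` to the line `x + t • v`, `v = y - x`, and follow the directional derivative
`g t = L'(x + t • v) v`. While the segment stays in `𝔹` its slope `L''(x + t • v) v v` is at most
`-c ‖v‖²`, so `g D ≤ g 0 - D c ‖v‖²`. Concavity makes `g` antitone and `g 1 = 0` at the maximizer,
so `g D ≥ 0`; finally `g 0 = ⟪∇L x, v⟫ ≤ ‖∇L x‖ ‖v‖`.
-/

open Set

section LineRestriction

variable {E F : Type*} [NormedAddCommGroup E] [NormedSpace ℝ E]
  [NormedAddCommGroup F] [NormedSpace ℝ F]

theorem hasDerivAt_comp_add_smul {f : E → F} {x v : E} {t : ℝ}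
    (hf : DifferentiableAt ℝ f (x + t • v)) :
    HasDerivAt (fun s : ℝ => f (x + s • v)) (fderiv ℝ f (x + t • v) v) t := by
  have hline : HasDerivAt (fun s : ℝ => x + s • v) v t := by
    simpa using ((hasDerivAt_id t).smul_const v).const_add x
  exact hf.hasFDerivAt.comp_hasDerivAt t hline

theorem hasDerivAt_fderiv_comp_add_smul {f : E → F} {x v : E} {t : ℝ}
    (hf : DifferentiableAt ℝ (fderiv ℝ f) (x + t • v)) :
    HasDerivAt (fun s : ℝ => fderiv ℝ f (x + s • v) v)
      (fderiv ℝ (fderiv ℝ f) (x + t • v) v v) t :=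
  (hasDerivAt_comp_add_smul hf).clm_apply (hasDerivAt_const t v) |>.congr_deriv (by simp)

theorem deriv_deriv_comp_add_smul_zero {f : E → F} (hf : ContDiff ℝ 2 f) (x v : E) :
    deriv (fun s : ℝ => deriv (fun u : ℝ => f (x + u • v)) s) 0 =
      fderiv ℝ (fderiv ℝ f) x v v := by
  have hf' : Differentiable ℝ (fderiv ℝ f) :=
    (hf.fderiv_right (le_refl 2)).differentiable one_ne_zero
  have hderiv : deriv (fun u : ℝ => f (x + u • v)) = fun s => fderiv ℝ f (x + s • v) v :=
    funext fun s => (hasDerivAt_comp_add_smul ((hf.differentiable two_ne_zero) _)).deriv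
  simpa [hderiv] using (hasDerivAt_fderiv_comp_add_smul (x := x) (v := v) (t := 0) (hf' _)).deriv

end LineRestriction

theorem ContinuousLinearMap.apply_self_le_mul_norm_sq {E : Type*} [NormedAddCommGroup E]
    [NormedSpace ℝ E] (B : E →L[ℝ] E →L[ℝ] ℝ) {a : ℝ} (hB : ∀ u, ‖u‖ = 1 → B u u ≤ a) (w : E) :
    B w w ≤ a * ‖w‖ ^ 2 := by
  rcases eq_or_ne w 0 with rfl | hw
  · simp
  have hw' : 0 < ‖w‖ := norm_pos_iff.2 hw
  have hunit : ‖‖w‖⁻¹ • w‖ = 1 := by rw [norm_smul, norm_inv, norm_norm, inv_mul_cancel₀ hw'.ne']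
  have hscale : B w w = ‖w‖ ^ 2 * B (‖w‖⁻¹ • w) (‖w‖⁻¹ • w) := by
    simp only [map_smul, smul_apply, smul_eq_mul]
    field_simp
  rw [hscale, mul_comm a]
  exact mul_le_mul_of_nonneg_left (hB _ hunit) (by positivity)

theorem Convex.add_smul_mem_of_mem_Icc {𝕜 E : Type*} [Field 𝕜] [LinearOrder 𝕜]
    [IsStrictOrderedRing 𝕜] [AddCommGroup E] [Module 𝕜 E] {s : Set E} (hs : Convex 𝕜 s)
    {x v : E} {D t : 𝕜} (hx : x ∈ s) (hD : x + D • v ∈ s) (ht : t ∈ Icc 0 D) :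
    x + t • v ∈ s := by
  have hline : ∀ r : 𝕜, AffineMap.lineMap x (x + v) r = x + r • v := fun r => by
    rw [AffineMap.lineMap_apply_module', add_sub_cancel_left, add_comm]
  have hconv := (hs.affine_preimage (AffineMap.lineMap x (x + v))).ordConnected
  simpa [hline] using hconv.out (by simpa [hline] using hx) (by simpa [hline] using hD) ht

theorem ConcaveOn.comp_add_smul {E : Type*} [AddCommGroup E] [Module ℝ E] {L : E → ℝ}
    (hL : ConcaveOn ℝ univ L) (x v : E) : ConcaveOn ℝ univ (fun t : ℝ => L (x + t • v)) := by
  have hline : (L ∘ AffineMap.lineMap x (x + v)) = fun t : ℝ => L (x + t • v) := funext fun r => by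
    rw [Function.comp_apply, AffineMap.lineMap_apply_module', add_sub_cancel_left, add_comm]
  simpa [hline] using hL.comp_affineMap (AffineMap.lineMap x (x + v))

theorem ConcaveOn.deriv_nonneg_of_le_of_forall_le {h : ℝ → ℝ} (hconc : ConcaveOn ℝ univ h)
    (hd : Differentiable ℝ h) {b t : ℝ} (hmax : ∀ s, h s ≤ h b) (ht : t ≤ b) :
    0 ≤ deriv h t := by
  have hb : deriv h b = 0 := IsLocalMax.deriv_eq_zero (Filter.Eventually.of_forall hmax)
  exact hb ▸ hconc.antitoneOn_deriv (fun x _ => hd x) trivial trivial ht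

theorem ConcaveOn.mul_mul_norm_sub_le_norm_gradient {E : Type*} [NormedAddCommGroup E]
    [InnerProductSpace ℝ E] [CompleteSpace E] {L : E → ℝ} (hconc : ConcaveOn ℝ univ L)
    (hL : ContDiff ℝ 2 L) {x y : E} (hmax : ∀ q, L q ≤ L y) {c D : ℝ} (hD₀ : 0 ≤ D)
    (hD₁ : D ≤ 1)
    (hcurv : ∀ t ∈ Icc 0 D,
      fderiv ℝ (fderiv ℝ L) (x + t • (y - x)) (y - x) (y - x) ≤ -c * ‖y - x‖ ^ 2) :
    D * c * ‖x - y‖ ≤ ‖gradient L x‖ := by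
  rw [norm_sub_rev]
  set v := y - x
  have hL₁ : Differentiable ℝ L := hL.differentiable two_ne_zero
  have hL₂ : Differentiable ℝ (fderiv ℝ L) :=
    (hL.fderiv_right (le_refl 2)).differentiable one_ne_zero
  set g : ℝ → ℝ := fun t => fderiv ℝ L (x + t • v) v
  have hg : ∀ t, HasDerivAt g (fderiv ℝ (fderiv ℝ L) (x + t • v) v v) t := fun t =>
    hasDerivAt_fderiv_comp_add_smul (hL₂ _)
  have hdrop : g D - g 0 ≤ -c * ‖v‖ ^ 2 * (D - 0) :=
    (convex_Icc 0 D).image_sub_le_mul_sub_of_deriv_le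
      (fun t _ => (hg t).continuousAt.continuousWithinAt)
      (fun t _ => (hg t).differentiableAt.differentiableWithinAt)
      (fun t ht => (hg t).deriv ▸ hcurv t (interior_subset ht))
      0 (left_mem_Icc.2 hD₀) D (right_mem_Icc.2 hD₀) hD₀
  have hgD : 0 ≤ g D := by
    have hend : x + (1 : ℝ) • v = y := by simp [v]
    have := (hconc.comp_add_smul x v).deriv_nonneg_of_le_of_forall_le
      (fun t => (hasDerivAt_comp_add_smul (hL₁ _)).differentiableAt)
      (fun t => by simpa only [hend] using hmax _) hD₁
    rwa [(hasDerivAt_comp_add_smul (hL₁ _)).deriv] at this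
  have hg0 : g 0 ≤ ‖gradient L x‖ * ‖v‖ := by
    simpa [g, inner_gradient_left] using real_inner_le_norm (gradient L x) v
  have hkey : D * c * ‖v‖ * ‖v‖ ≤ ‖gradient L x‖ * ‖v‖ := by linarith
  rcases (norm_nonneg v).eq_or_lt with hv | hv
  · simp [← hv]
  · exact le_of_mul_le_mul_right hkey hv

theorem stmt8_general {d : ℕ} (L : EuclideanSpace ℝ (Fin (d + 1)) → ℝ)
    (𝔹 : Set (EuclideanSpace ℝ (Fin (d + 1))))
    (hconc : ConcaveOn ℝ Set.univ L) (hC2 : ContDiff ℝ 2 L)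
    (hconv : Convex ℝ 𝔹)
    (p₀ phat : EuclideanSpace ℝ (Fin (d + 1)))
    (hint : p₀ ∈ interior 𝔹)
    (hmax : ∀ q, L q ≤ L phat)
    (c : ℝ)
    (hc : IsLeast {t : ℝ | ∃ p ∈ 𝔹, ∃ v : EuclideanSpace ℝ (Fin (d + 1)), ‖v‖ = 1 ∧
        t = -(deriv (fun s : ℝ => deriv (fun u : ℝ => L (p + u • v)) s) 0)} c)
    (D : ℝ)
    (hD : IsGreatest {t ∈ Set.Icc (0 : ℝ) 1 | p₀ + t • (phat - p₀) ∈ 𝔹} D) :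
    ‖gradient L p₀‖ ≥ D * c * ‖p₀ - phat‖ := by
  refine hconc.mul_mul_norm_sub_le_norm_gradient hC2 hmax hD.1.1.1 hD.1.1.2 fun t ht => ?_
  have hseg : p₀ + t • (phat - p₀) ∈ 𝔹 :=
    hconv.add_smul_mem_of_mem_Icc (interior_subset hint) hD.1.2 ht
  refine ContinuousLinearMap.apply_self_le_mul_norm_sq _ (fun u hu => ?_) _
  have hcu := hc.2 ⟨_, hseg, u, hu, rfl⟩
  rw [deriv_deriv_comp_add_smul_zero hC2] at hcu
  linarith

theorem stmt8 {d : ℕ} (L : EuclideanSpace ℝ (Fin (d + 1)) → ℝ)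
    (𝔹 : Set (EuclideanSpace ℝ (Fin (d + 1))))
    (hconc : ConcaveOn ℝ Set.univ L) (hC2 : ContDiff ℝ 2 L)
    (hconv : Convex ℝ 𝔹) (hcomp : IsCompact 𝔹)
    (p₀ phat : EuclideanSpace ℝ (Fin (d + 1)))
    (hint : p₀ ∈ interior 𝔹)
    (hmax : ∀ q, L q ≤ L phat)
    (c : ℝ)
    (hc : IsLeast {t : ℝ | ∃ p ∈ 𝔹, ∃ v : EuclideanSpace ℝ (Fin (d + 1)), ‖v‖ = 1 ∧
        t = -(deriv (fun s : ℝ => deriv (fun u : ℝ => L (p + u • v)) s) 0)} c)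
    (D : ℝ)
    (hD : IsGreatest {t ∈ Set.Icc (0 : ℝ) 1 | p₀ + t • (phat - p₀) ∈ 𝔹} D) :
    ‖gradient L p₀‖ ≥ D * c * ‖p₀ - phat‖ :=
  stmt8_general L 𝔹 hconc hC2 hconv p₀ phat hint hmax c hc D hD
end

section
/- Let y be a random vector in {-1,+1}ⁿ distributed according to the Ising-type model Pr[y = σ] ∝ exp(β₀ f(σ) + Σ_v (θ₀^T x_v)σ_v), where f(σ) = Σ_e w_e σ_e is a multilinear polynomial of degree at most m with Σ_{e: i∈e}|w_e| ≤ 1 for all i and |β₀| ≤ B. Define Q(y) = Σᵢ (yᵢ - tanh(β₀ fᵢ(y₋ᵢ) + θ₀^T xᵢ)) fᵢ(y₋ᵢ), where fᵢ = ∂f/∂yᵢ. Then E[Q(y)²] ≤ (12 + 4B)(m-1)·n. -/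
open Matrix

noncomputable section

/-- The spin value of a Boolean configuration coordinate. -/
def sgn (b : Bool) : ℝ := if b then 1 else -1

/-- The ±1 configuration associated to a Boolean configuration. -/
def conf {n : ℕ} (s : Fin n → Bool) : Fin n → ℝ := fun i => sgn (s i)

/-- The multilinear polynomial `f(σ) = Σ_e w_e Π_{v ∈ e} σ_v` of a weighted hypergraph. -/
def fpoly {n : ℕ} (w : Finset (Fin n) → ℝ) (σ : Fin n → ℝ) : ℝ :=
  ∑ e : Finset (Fin n), w e * ∏ v ∈ e, σ v

/-- The partial derivative `f_i = ∂f/∂y_i`. -/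
def fder {n : ℕ} (w : Finset (Fin n) → ℝ) (i : Fin n) (σ : Fin n → ℝ) : ℝ :=
  ∑ e ∈ Finset.univ.filter (fun e : Finset (Fin n) => i ∈ e), w e * ∏ v ∈ e.erase i, σ v

/-- The (log-)weight `β f(σ) + Σ_v (θᵀ x_v) σ_v` of a configuration. -/
def ham {n d : ℕ} (w : Finset (Fin n) → ℝ) (x : Fin n → Fin d → ℝ)
    (θ : Fin d → ℝ) (β : ℝ) (s : Fin n → Bool) : ℝ :=
  β * fpoly w (conf s) + ∑ v, (θ ⬝ᵥ x v) * conf s v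

/-- Expectation of `g` under the Ising-type model `Pr[y = σ] ∝ exp(β f(σ) + Σ_v (θᵀx_v)σ_v)`. -/
def expec {n d : ℕ} (w : Finset (Fin n) → ℝ) (x : Fin n → Fin d → ℝ)
    (θ : Fin d → ℝ) (β : ℝ) (g : (Fin n → Bool) → ℝ) : ℝ :=
  (∑ s : Fin n → Bool, g s * Real.exp (ham w x θ β s)) /
    (∑ s : Fin n → Bool, Real.exp (ham w x θ β s))

/-! Write `Q = ∑ᵢ Tᵢ` with `Tᵢ = (yᵢ - tanh(β fᵢ + θᵀxᵢ)) fᵢ`. Since `tanh(β fᵢ + θᵀxᵢ)` is the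
conditional mean of `yᵢ` given the other spins, `E[Tᵢ g] = E[Tᵢ (g - g ∘ flipᵢ)]` for every `g`
(the difference being `yᵢ - E[yᵢ | y₋ᵢ]` times a function of `y₋ᵢ`). Hence
`E[Q²] = ∑ᵢ E[Tᵢ (Q(y) - Q(yⁱ))] ≤ n · 2 · (6 + 2B)(m - 1)`: indeed `|Tᵢ| ≤ 2`, and changing one
spin `yⱼ` moves `Tⱼ` by at most `2` and each other `Tᵢ` by at most `(2 + B)` times the change of
`fᵢ`, while `∑_{i ≠ j} |Δfᵢ| ≤ 2 ∑_{e ∋ j} (|e| - 1) |w_e| ≤ 2 (m - 1)`. -/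

namespace Real

theorem hasDerivAt_tanh (x : ℝ) : HasDerivAt tanh (1 - tanh x ^ 2) x := by
  have hcosh := (cosh_pos x).ne'
  have h := (hasDerivAt_sinh x).div (hasDerivAt_cosh x) hcosh
  rw [show tanh = fun y => sinh y / cosh y from funext tanh_eq_sinh_div_cosh]
  refine h.congr_deriv ?_
  change _ = 1 - (sinh x / cosh x) ^ 2
  field_simp

theorem lipschitzWith_tanh : LipschitzWith 1 tanh := by
  refine lipschitzWith_of_nnnorm_deriv_le (fun x => (hasDerivAt_tanh x).differentiableAt)
    fun x => ?_
  rw [(hasDerivAt_tanh x).deriv, ← NNReal.coe_le_coe, coe_nnnorm, norm_eq_abs, NNReal.coe_one,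
    abs_le]
  constructor <;> nlinarith [tanh_sq_lt_one x, sq_nonneg (tanh x)]

theorem abs_tanh_sub_tanh_le (a b : ℝ) : |tanh a - tanh b| ≤ |a - b| := by
  simpa [Real.dist_eq] using lipschitzWith_tanh.dist_le_mul a b

end Real

open Real

lemma abs_sgn (b : Bool) : |sgn b| = 1 := by
  cases b <;> simp [sgn]

lemma sum_sgn_sub_tanh_mul_exp (a : ℝ) : ∑ b : Bool, (sgn b - tanh a) * exp (a * sgn b) = 0 := by
  have hpos : 0 < exp a + exp (-a) := by positivity
  simp only [Fintype.sum_bool, sgn, if_true, Bool.false_eq_true, if_false, mul_one, mul_neg_one,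
    tanh_eq]
  field_simp
  ring

section Spins

variable {n d : ℕ}

lemma abs_conf (s : Fin n → Bool) (v : Fin n) : |conf s v| = 1 := abs_sgn (s v)

lemma conf_update_self (s : Fin n → Bool) (i : Fin n) (b : Bool) :
    conf (Function.update s i b) i = sgn b := by
  simp [conf]

lemma conf_update_of_ne (s : Fin n → Bool) {i v : Fin n} (b : Bool) (h : v ≠ i) :
    conf (Function.update s i b) v = conf s v := by
  simp [conf, Function.update_of_ne h]

lemma abs_prod_le_one {σ : Fin n → ℝ} (hσ : ∀ v, |σ v| ≤ 1) (e : Finset (Fin n)) :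
    |∏ v ∈ e, σ v| ≤ 1 := by
  rw [Finset.abs_prod]
  exact Finset.prod_le_one (fun _ _ => abs_nonneg _) fun v _ => hσ v

lemma fder_congr (w : Finset (Fin n) → ℝ) {i : Fin n} {σ σ' : Fin n → ℝ}
    (h : ∀ v, v ≠ i → σ v = σ' v) : fder w i σ = fder w i σ' :=
  Finset.sum_congr rfl fun _ _ =>
    congrArg _ (Finset.prod_congr rfl fun v hv => h v (Finset.ne_of_mem_erase hv))

lemma fder_update (w : Finset (Fin n) → ℝ) (i : Fin n) (s : Fin n → Bool) (b : Bool) :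
    fder w i (conf (Function.update s i b)) = fder w i (conf s) :=
  fder_congr w fun _ hv => conf_update_of_ne s b hv

lemma abs_fder_le (w : Finset (Fin n) → ℝ) {σ : Fin n → ℝ} (hσ : ∀ v, |σ v| ≤ 1) (i : Fin n) :
    |fder w i σ| ≤ ∑ e ∈ Finset.univ.filter (fun e : Finset (Fin n) => i ∈ e), |w e| := by
  refine (Finset.abs_sum_le_sum_abs _ _).trans (Finset.sum_le_sum fun e _ => ?_)
  rw [abs_mul]
  exact mul_le_of_le_one_right (abs_nonneg _) (abs_prod_le_one hσ _)

lemma abs_fder_sub_fder_le (w : Finset (Fin n) → ℝ) {σ σ' : Fin n → ℝ} (hσ : ∀ v, |σ v| ≤ 1)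
    (hσ' : ∀ v, |σ' v| ≤ 1) {j : Fin n} (h : ∀ v, v ≠ j → σ v = σ' v) (i : Fin n) :
    |fder w i σ - fder w i σ'| ≤
      2 * ∑ e ∈ Finset.univ.filter (fun e : Finset (Fin n) => i ∈ e ∧ j ∈ e), |w e| := by
  have hterm : ∀ e : Finset (Fin n), |w e * ∏ v ∈ e.erase i, σ v - w e * ∏ v ∈ e.erase i, σ' v|
      ≤ if j ∈ e then 2 * |w e| else 0 := by
    intro e
    rw [← mul_sub, abs_mul]
    split_ifs with hj
    · rw [mul_comm]
      refine mul_le_mul_of_nonneg_right ((abs_sub _ _).trans ?_) (abs_nonneg _)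
      linarith [abs_prod_le_one hσ (e.erase i), abs_prod_le_one hσ' (e.erase i)]
    · rw [Finset.prod_congr rfl fun v hv => h v fun hvj => hj (hvj ▸ Finset.mem_of_mem_erase hv),
        sub_self, abs_zero, mul_zero]
  calc |fder w i σ - fder w i σ'|
      ≤ ∑ e ∈ Finset.univ.filter (fun e : Finset (Fin n) => i ∈ e),
          |w e * ∏ v ∈ e.erase i, σ v - w e * ∏ v ∈ e.erase i, σ' v| := by
        rw [fder, fder, ← Finset.sum_sub_distrib]
        exact Finset.abs_sum_le_sum_abs _ _
    _ ≤ ∑ e ∈ Finset.univ.filter (fun e : Finset (Fin n) => i ∈ e),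
          if j ∈ e then 2 * |w e| else 0 := Finset.sum_le_sum fun e _ => hterm e
    _ = 2 * ∑ e ∈ Finset.univ.filter (fun e : Finset (Fin n) => i ∈ e ∧ j ∈ e), |w e| := by
        rw [← Finset.sum_filter, Finset.filter_filter, Finset.mul_sum]

/-- The sum of the co-degrees `∑_{e ∋ i, j} |w e|` over `i ≠ j` counts each edge `e ∋ j`
`|e| - 1` times. -/
lemma sum_erase_sum_abs_le {m : ℕ} (hm : 1 ≤ m) {w : Finset (Fin n) → ℝ}
    (hcard : ∀ e : Finset (Fin n), w e ≠ 0 → e.card ≤ m) {j : Fin n}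
    (hdeg : ∑ e ∈ Finset.univ.filter (fun e : Finset (Fin n) => j ∈ e), |w e| ≤ 1) :
    ∑ i ∈ Finset.univ.erase j,
      ∑ e ∈ Finset.univ.filter (fun e : Finset (Fin n) => i ∈ e ∧ j ∈ e), |w e| ≤ (m : ℝ) - 1 := by
  have hcount : ∀ e ∈ Finset.univ.filter (fun e : Finset (Fin n) => j ∈ e),
      ∑ i ∈ Finset.univ.erase j, (if i ∈ e then |w e| else 0) ≤ ((m : ℝ) - 1) * |w e| := by
    intro e he
    have hje : j ∈ e := (Finset.mem_filter.mp he).2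
    have hfilter : (Finset.univ.erase j).filter (· ∈ e) = e.erase j := by
      ext; simp [and_comm]
    rw [← Finset.sum_filter, hfilter, Finset.sum_const, nsmul_eq_mul,
      Finset.cast_card_erase_of_mem hje]
    by_cases hw : w e = 0
    · simp [hw]
    have hem : (e.card : ℝ) ≤ m := by exact_mod_cast hcard e hw
    exact mul_le_mul_of_nonneg_right (by linarith) (abs_nonneg _)
  calc ∑ i ∈ Finset.univ.erase j,
        ∑ e ∈ Finset.univ.filter (fun e : Finset (Fin n) => i ∈ e ∧ j ∈ e), |w e|
      = ∑ e ∈ Finset.univ.filter (fun e : Finset (Fin n) => j ∈ e),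
          ∑ i ∈ Finset.univ.erase j, (if i ∈ e then |w e| else 0) := by
        rw [Finset.sum_comm]
        refine Finset.sum_congr rfl fun i _ => ?_
        rw [← Finset.sum_filter, Finset.filter_filter]
        simp only [and_comm]
    _ ≤ ∑ e ∈ Finset.univ.filter (fun e : Finset (Fin n) => j ∈ e), ((m : ℝ) - 1) * |w e| :=
        Finset.sum_le_sum hcount
    _ ≤ (m : ℝ) - 1 := by
        rw [← Finset.mul_sum]
        exact mul_le_of_le_one_right (by simpa using hm) hdeg

end Spins

section Model

variable {n d : ℕ} (w : Finset (Fin n) → ℝ) (x : Fin n → Fin d → ℝ) (θ : Fin d → ℝ) (β : ℝ)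

def qTerm (i : Fin n) (s : Fin n → Bool) : ℝ :=
  (conf s i - tanh (β * fder w i (conf s) + θ ⬝ᵥ x i)) * fder w i (conf s)

def hamWithout (i : Fin n) (s : Fin n → Bool) : ℝ :=
  β * ∑ e ∈ Finset.univ.filter (fun e : Finset (Fin n) => i ∉ e), w e * ∏ v ∈ e, conf s v
    + ∑ v ∈ Finset.univ.erase i, (θ ⬝ᵥ x v) * conf s v

lemma hamWithout_update (i : Fin n) (s : Fin n → Bool) (b : Bool) :
    hamWithout w x θ β i (Function.update s i b) = hamWithout w x θ β i s := by
  unfold hamWithout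
  congr 1
  · refine congrArg _ (Finset.sum_congr rfl fun e he =>
      congrArg _ (Finset.prod_congr rfl fun v hv => ?_))
    exact conf_update_of_ne s b fun hvi => (Finset.mem_filter.mp he).2 (hvi ▸ hv)
  · exact Finset.sum_congr rfl fun v hv =>
      congrArg _ (conf_update_of_ne s b (Finset.ne_of_mem_erase hv))

lemma ham_eq_mul_conf_add_hamWithout (i : Fin n) (s : Fin n → Bool) :
    ham w x θ β s = (β * fder w i (conf s) + θ ⬝ᵥ x i) * conf s i + hamWithout w x θ β i s := by
  have hedges : ∑ e ∈ Finset.univ.filter (fun e : Finset (Fin n) => i ∈ e),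
      w e * ∏ v ∈ e, conf s v = fder w i (conf s) * conf s i := by
    rw [fder, Finset.sum_mul]
    refine Finset.sum_congr rfl fun e he => ?_
    rw [← Finset.mul_prod_erase e _ (Finset.mem_filter.mp he).2]
    ring
  rw [ham, fpoly, hamWithout, ← Finset.sum_filter_add_sum_filter_not Finset.univ (i ∈ ·),
    ← Finset.add_sum_erase Finset.univ _ (Finset.mem_univ i), hedges]
  ring

/-- `tanh (β fᵢ + θᵀxᵢ)` is the conditional mean of the spin at `i` given the other spins. -/
lemma expec_conf_sub_tanh_mul_eq_zero (i : Fin n) {g : (Fin n → Bool) → ℝ}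
    (hg : ∀ s b, g (Function.update s i b) = g s) :
    expec w x θ β (fun s => (conf s i - tanh (β * fder w i (conf s) + θ ⬝ᵥ x i)) * g s) = 0 := by
  set F : (Fin n → Bool) → ℝ := fun s =>
    (conf s i - tanh (β * fder w i (conf s) + θ ⬝ᵥ x i)) * g s * exp (ham w x θ β s)
  have hflip : Function.Involutive fun s : Fin n → Bool => Function.update s i (!s i) := by
    intro s
    simp
  have hpair : ∀ s, F s + F (Function.update s i (!s i)) = 0 := by
    intro s
    set a := β * fder w i (conf s) + θ ⬝ᵥ x i
    have hupdate : ∀ b, F (Function.update s i b) =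
        g s * exp (hamWithout w x θ β i s) * ((sgn b - tanh a) * exp (a * sgn b)) := by
      intro b
      simp only [F, ham_eq_mul_conf_add_hamWithout w x θ β i, fder_update, hamWithout_update,
        conf_update_self, hg, exp_add, a]
      ring
    have hself : F s = F (Function.update s i (s i)) := by rw [Function.update_eq_self]
    calc F s + F (Function.update s i (!s i))
        = g s * exp (hamWithout w x θ β i s) * ∑ b : Bool, (sgn b - tanh a) * exp (a * sgn b) := by
          rw [hself, hupdate, hupdate, Fintype.sum_bool, ← mul_add]
          cases s i <;> simp [add_comm]
      _ = 0 := by rw [sum_sgn_sub_tanh_mul_exp, mul_zero]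
  have hzero : ∑ s, F s = 0 := by
    have htwice : ∑ s, F s + ∑ s, F s = 0 := by
      nth_rewrite 2 [← Equiv.sum_comp (hflip.toPerm _) F]
      rw [← Finset.sum_add_distrib]
      exact Finset.sum_eq_zero fun s _ => hpair s
    linarith
  rw [expec, hzero, zero_div]

end Model

section QBounds

variable {n d : ℕ} {w : Finset (Fin n) → ℝ} (x : Fin n → Fin d → ℝ) (θ : Fin d → ℝ) (β : ℝ)

lemma abs_conf_sub_tanh_le_two (s : Fin n → Bool) (i : Fin n) (a : ℝ) :
    |conf s i - tanh a| ≤ 2 := by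
  linarith [abs_sub (conf s i) (tanh a), abs_conf s i, (abs_tanh_lt_one a).le]

lemma abs_qTerm_le_two {i : Fin n}
    (hdeg : ∑ e ∈ Finset.univ.filter (fun e : Finset (Fin n) => i ∈ e), |w e| ≤ 1)
    (s : Fin n → Bool) : |qTerm w x θ β i s| ≤ 2 := by
  rw [qTerm, abs_mul]
  exact mul_le_of_le_one_right (abs_nonneg _)
    ((abs_fder_le w (fun v => (abs_conf s v).le) i).trans hdeg)
    |>.trans (abs_conf_sub_tanh_le_two s i _)

lemma abs_qTerm_sub_qTerm_update_self_le {j : Fin n}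
    (hdeg : ∑ e ∈ Finset.univ.filter (fun e : Finset (Fin n) => j ∈ e), |w e| ≤ 1)
    (s : Fin n → Bool) (b : Bool) :
    |qTerm w x θ β j s - qTerm w x θ β j (Function.update s j b)| ≤ 2 := by
  have hfder : |fder w j (conf s)| ≤ 1 := (abs_fder_le w (fun v => (abs_conf s v).le) j).trans hdeg
  rw [qTerm, qTerm, fder_update, ← sub_mul, sub_sub_sub_cancel_right, abs_mul]
  refine mul_le_of_le_one_right (abs_nonneg _) hfder |>.trans ?_
  linarith [abs_sub (conf s j) (conf (Function.update s j b) j), abs_conf s j,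
    abs_conf (Function.update s j b) j]

lemma abs_qTerm_sub_qTerm_update_le {B : ℝ} (hβ : |β| ≤ B) {i j : Fin n} (hij : i ≠ j)
    (hdeg : ∑ e ∈ Finset.univ.filter (fun e : Finset (Fin n) => i ∈ e), |w e| ≤ 1)
    (s : Fin n → Bool) (b : Bool) :
    |qTerm w x θ β i s - qTerm w x θ β i (Function.update s j b)| ≤
      (2 + B) * |fder w i (conf s) - fder w i (conf (Function.update s j b))| := by
  set s' := Function.update s j b
  set a := fder w i (conf s)
  set a' := fder w i (conf s')
  set t := tanh (β * a + θ ⬝ᵥ x i)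
  set t' := tanh (β * a' + θ ⬝ᵥ x i)
  have hB : 0 ≤ B := (abs_nonneg β).trans hβ
  have ha' : |a'| ≤ 1 := (abs_fder_le w (fun v => (abs_conf s' v).le) i).trans hdeg
  have hspin : |conf s i - t| ≤ 2 := abs_conf_sub_tanh_le_two s i _
  have htanh : |t' - t| ≤ B * |a - a'| := by
    calc |t' - t| ≤ |(β * a' + θ ⬝ᵥ x i) - (β * a + θ ⬝ᵥ x i)| := abs_tanh_sub_tanh_le _ _
      _ = |β| * |a - a'| := by rw [← abs_mul, abs_sub_comm]; ring_nf
      _ ≤ B * |a - a'| := mul_le_mul_of_nonneg_right hβ (abs_nonneg _)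
  have hsplit : qTerm w x θ β i s - qTerm w x θ β i s' =
      (conf s i - t) * (a - a') + (t' - t) * a' := by
    rw [qTerm, qTerm, conf_update_of_ne s b hij]
    ring
  rw [hsplit]
  calc |(conf s i - t) * (a - a') + (t' - t) * a'|
      ≤ |conf s i - t| * |a - a'| + |t' - t| * |a'| := by
        rw [← abs_mul, ← abs_mul]; exact abs_add_le _ _
    _ ≤ 2 * |a - a'| + B * |a - a'| * 1 := by gcongr
    _ = (2 + B) * |a - a'| := by ring

lemma abs_sum_qTerm_sub_sum_qTerm_update_le {m : ℕ} (hm : 2 ≤ m)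
    (hcard : ∀ e : Finset (Fin n), w e ≠ 0 → e.card ≤ m)
    (hdeg : ∀ i : Fin n,
      ∑ e ∈ Finset.univ.filter (fun e : Finset (Fin n) => i ∈ e), |w e| ≤ 1)
    {B : ℝ} (hβ : |β| ≤ B) (j : Fin n) (s : Fin n → Bool) (b : Bool) :
    |∑ i, qTerm w x θ β i s - ∑ i, qTerm w x θ β i (Function.update s j b)| ≤
      (6 + 2 * B) * ((m : ℝ) - 1) := by
  set s' := Function.update s j b
  have hB : 0 ≤ B := (abs_nonneg β).trans hβ
  have hm' : (2 : ℝ) ≤ m := by exact_mod_cast hm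
  have hothers : ∀ i ∈ Finset.univ.erase j, |qTerm w x θ β i s - qTerm w x θ β i s'| ≤
      (2 + B) * (2 * ∑ e ∈ Finset.univ.filter (fun e : Finset (Fin n) => i ∈ e ∧ j ∈ e), |w e|) :=
    fun i hi =>
      (abs_qTerm_sub_qTerm_update_le x θ β hβ (Finset.ne_of_mem_erase hi) (hdeg i) s b).trans
      (mul_le_mul_of_nonneg_left (abs_fder_sub_fder_le w (fun v => (abs_conf s v).le)
        (fun v => (abs_conf s' v).le) (fun _ hv => (conf_update_of_ne s b hv).symm) i)
        (by linarith))
  have hcodeg := sum_erase_sum_abs_le (by omega) hcard (hdeg j)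
  calc |∑ i, qTerm w x θ β i s - ∑ i, qTerm w x θ β i s'|
      ≤ ∑ i, |qTerm w x θ β i s - qTerm w x θ β i s'| := by
        rw [← Finset.sum_sub_distrib]; exact Finset.abs_sum_le_sum_abs _ _
    _ = ∑ i ∈ Finset.univ.erase j, |qTerm w x θ β i s - qTerm w x θ β i s'|
          + |qTerm w x θ β j s - qTerm w x θ β j s'| :=
        (Finset.sum_erase_add _ _ (Finset.mem_univ j)).symm
    _ ≤ (2 + B) * (2 * ∑ i ∈ Finset.univ.erase j,
          ∑ e ∈ Finset.univ.filter (fun e : Finset (Fin n) => i ∈ e ∧ j ∈ e), |w e|) + 2 := by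
        rw [Finset.mul_sum, Finset.mul_sum]
        exact add_le_add (Finset.sum_le_sum hothers)
          (abs_qTerm_sub_qTerm_update_self_le x θ β (hdeg j) s b)
    _ ≤ (2 + B) * (2 * ((m : ℝ) - 1)) + 2 := by gcongr
    _ ≤ (6 + 2 * B) * ((m : ℝ) - 1) := by nlinarith

end QBounds

section Expectation

variable {n d : ℕ} (w : Finset (Fin n) → ℝ) (x : Fin n → Fin d → ℝ) (θ : Fin d → ℝ) (β : ℝ)

lemma expec_add (f g : (Fin n → Bool) → ℝ) :
    expec w x θ β (fun s => f s + g s) = expec w x θ β f + expec w x θ β g := by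
  simp only [expec, add_mul, Finset.sum_add_distrib, add_div]

lemma expec_sum {ι : Type*} (t : Finset ι) (g : ι → (Fin n → Bool) → ℝ) :
    expec w x θ β (fun s => ∑ i ∈ t, g i s) = ∑ i ∈ t, expec w x θ β (g i) := by
  simp only [expec, Finset.sum_mul, ← Finset.sum_div]
  rw [Finset.sum_comm]

lemma expec_le_of_forall_le {g : (Fin n → Bool) → ℝ} {c : ℝ} (h : ∀ s, g s ≤ c) :
    expec w x θ β g ≤ c := by
  have hZ : 0 < ∑ s : Fin n → Bool, exp (ham w x θ β s) :=
    Finset.sum_pos (fun s _ => exp_pos _) Finset.univ_nonempty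
  rw [expec, div_le_iff₀ hZ, Finset.mul_sum]
  exact Finset.sum_le_sum fun s _ => mul_le_mul_of_nonneg_right (h s) (exp_pos _).le

lemma expec_qTerm_mul (i : Fin n) (g : (Fin n → Bool) → ℝ) :
    expec w x θ β (fun s => qTerm w x θ β i s * g s) =
      expec w x θ β (fun s => qTerm w x θ β i s * (g s - g (Function.update s i false))) := by
  have hsplit : (fun s => qTerm w x θ β i s * g s) = fun s =>
      qTerm w x θ β i s * (g s - g (Function.update s i false)) +
        (conf s i - tanh (β * fder w i (conf s) + θ ⬝ᵥ x i)) *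
          (fder w i (conf s) * g (Function.update s i false)) := by
    funext s
    rw [qTerm]
    ring
  rw [hsplit, expec_add, expec_conf_sub_tanh_mul_eq_zero, add_zero]
  intro s b
  rw [fder_update, Function.update_idem]

end Expectation

theorem stmt12 {n d m : ℕ} (hm : 2 ≤ m) (w : Finset (Fin n) → ℝ)
    (x : Fin n → Fin d → ℝ) (θ₀ : Fin d → ℝ) (β₀ B : ℝ)
    (hcard : ∀ e : Finset (Fin n), w e ≠ 0 → 2 ≤ e.card ∧ e.card ≤ m)
    (hdeg : ∀ i : Fin n,
      ∑ e ∈ Finset.univ.filter (fun e : Finset (Fin n) => i ∈ e), |w e| ≤ 1)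
    (hβ : |β₀| ≤ B)
    (Q : (Fin n → Bool) → ℝ)
    (hQ : ∀ s, Q s = ∑ i,
      (conf s i - Real.tanh (β₀ * fder w i (conf s) + θ₀ ⬝ᵥ x i)) * fder w i (conf s)) :
    expec w x θ₀ β₀ (fun s => (Q s) ^ 2) ≤ (12 + 4 * B) * ((m : ℝ) - 1) * n := by
  obtain rfl : Q = fun s => ∑ i, qTerm w x θ₀ β₀ i s := funext hQ
  have hterm : ∀ i s, qTerm w x θ₀ β₀ i s * (∑ j, qTerm w x θ₀ β₀ j s -
      ∑ j, qTerm w x θ₀ β₀ j (Function.update s i false)) ≤ (12 + 4 * B) * ((m : ℝ) - 1) := by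
    intro i s
    calc _ ≤ |qTerm w x θ₀ β₀ i s| * |∑ j, qTerm w x θ₀ β₀ j s -
          ∑ j, qTerm w x θ₀ β₀ j (Function.update s i false)| := by
          rw [← abs_mul]; exact le_abs_self _
      _ ≤ 2 * ((6 + 2 * B) * ((m : ℝ) - 1)) :=
          mul_le_mul (abs_qTerm_le_two x θ₀ β₀ (hdeg i) s)
            (abs_sum_qTerm_sub_sum_qTerm_update_le x θ₀ β₀ hm (fun e he => (hcard e he).2) hdeg
              hβ i s false) (abs_nonneg _) zero_le_two
      _ = (12 + 4 * B) * ((m : ℝ) - 1) := by ring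
  calc expec w x θ₀ β₀ (fun s => (∑ i, qTerm w x θ₀ β₀ i s) ^ 2)
      = ∑ i, expec w x θ₀ β₀ (fun s => qTerm w x θ₀ β₀ i s * ∑ j, qTerm w x θ₀ β₀ j s) := by
        simp only [sq, Finset.sum_mul, expec_sum]
    _ = ∑ i, expec w x θ₀ β₀ (fun s => qTerm w x θ₀ β₀ i s * (∑ j, qTerm w x θ₀ β₀ j s -
          ∑ j, qTerm w x θ₀ β₀ j (Function.update s i false))) :=
        Finset.sum_congr rfl fun i _ => expec_qTerm_mul w x θ₀ β₀ i _
    _ ≤ ∑ _i : Fin n, (12 + 4 * B) * ((m : ℝ) - 1) :=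
        Finset.sum_le_sum fun i _ => expec_le_of_forall_le w x θ₀ β₀ (hterm i)
    _ = (12 + 4 * B) * ((m : ℝ) - 1) * n := by
        rw [Finset.sum_const, Finset.card_univ, Fintype.card_fin, nsmul_eq_mul, mul_comm]
end
end

section
/- Let g: {-1,+1}ⁿ → ℝ and let y be sampled from an arbitrary probability distribution μ on {-1,+1}ⁿ. Suppose for every j, whenever y and y' differ only in coordinate j we have |g(y) - g(y')| ≤ Lⱼ, and suppose g(y) = Σᵢ (yᵢ - mᵢ(y₋ᵢ)) aᵢ(y₋ᵢ) where mᵢ(y₋ᵢ) = E_μ[yᵢ | y₋ᵢ] and |aᵢ| ≤ K. Then E_μ[g(y)²] ≤ 2K Σᵢ Lᵢ. -/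
/-!
Since `mcond i` is the conditional mean of the `i`-th spin, the centred spin `sgn (s i) - mcond i s`
is orthogonal (in `L²(p)`) to every function not depending on `s i`. Expanding `g²` through the
representation of `g` and subtracting, for each `i`, the product with `a i s * g (update s i false)`
(which does not depend on `s i`) gives
`E[g²] = ∑ i, E[(sgn (s i) - mcond i s) * a i s * (g s - g (update s i false))]`.
Each factor is bounded: the centred spin by `2` where `p s > 0`, `a i` by `K`, the increment by `L i`.
-/

noncomputable section

open Function Finset

lemma abs_sgn_le_one (b : Bool) : |sgn b| ≤ 1 := by
  cases b <;> simp [sgn]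

lemma abs_le_of_sum_mul_sub_eq_zero {α : Type*} [Fintype α] {w f : α → ℝ} {m C : ℝ}
    (hw : ∀ b, 0 ≤ w b) (hpos : 0 < ∑ b, w b) (hf : ∀ b, |f b| ≤ C)
    (hmean : ∑ b, w b * (f b - m) = 0) : |m| ≤ C := by
  have hm : m * ∑ b, w b = ∑ b, w b * f b := by
    simp only [mul_sub, sum_sub_distrib, ← sum_mul] at hmean
    linarith
  refine le_of_mul_le_mul_right ?_ hpos
  calc |m| * ∑ b, w b = |∑ b, w b * f b| := by rw [← hm, abs_mul, abs_of_pos hpos]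
    _ ≤ ∑ b, w b * |f b| := by
        refine (abs_sum_le_sum_abs _ _).trans_eq (sum_congr rfl fun b _ => ?_)
        rw [abs_mul, abs_of_nonneg (hw b)]
    _ ≤ ∑ b, w b * C := by gcongr with b; exacts [hw b, hf b]
    _ = C * ∑ b, w b := by rw [← sum_mul, mul_comm]

lemma update_funSplitAt_symm {ι α : Type*} [DecidableEq ι]
    (i : ι) (b b' : α) (t : {j // j ≠ i} → α) :
    update ((Equiv.funSplitAt i α).symm (b, t)) i b' = (Equiv.funSplitAt i α).symm (b', t) := by
  funext j
  rcases eq_or_ne j i with rfl | h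
  · simp [Equiv.funSplitAt, Equiv.piSplitAt]
  · simp [Equiv.funSplitAt, Equiv.piSplitAt, h]

section Configurations

variable {ι α : Type*} [Fintype ι] [DecidableEq ι] [Fintype α]

lemma sum_eq_zero_of_sum_update_eq_zero {M : Type*} [AddCommMonoid M] (i : ι)
    (F : (ι → α) → M) (hF : ∀ s, ∑ b, F (update s i b) = 0) : ∑ s, F s = 0 := by
  rw [← (Equiv.funSplitAt i α).symm.sum_comp, Fintype.sum_prod_type, sum_comm]
  refine sum_eq_zero fun t _ => ?_
  rcases isEmpty_or_nonempty α with _ | ⟨⟨b₀⟩⟩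
  · simp
  · simpa only [update_funSplitAt_symm] using hF ((Equiv.funSplitAt i α).symm (b₀, t))

variable (p : (ι → α) → ℝ) (f : α → ℝ)

lemma sum_mul_centered_mul_eq_zero (i : ι) (m h : (ι → α) → ℝ)
    (hmloc : ∀ s b, m (update s i b) = m s) (hhloc : ∀ s b, h (update s i b) = h s)
    (hmean : ∀ s, ∑ b, p (update s i b) * (f b - m s) = 0) :
    ∑ s, p s * ((f (s i) - m s) * h s) = 0 := by
  refine sum_eq_zero_of_sum_update_eq_zero i _ fun s => ?_
  calc ∑ b, p (update s i b) * ((f (update s i b i) - m (update s i b)) * h (update s i b))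
      = h s * ∑ b, p (update s i b) * (f b - m s) := by
        rw [mul_sum]
        refine sum_congr rfl fun b _ => ?_
        rw [update_self, hmloc, hhloc]
        ring
    _ = 0 := by rw [hmean, mul_zero]

lemma sum_mul_sq_eq_sum_sum_mul_sub_update (g : (ι → α) → ℝ) (m a : ι → (ι → α) → ℝ)
    (hmloc : ∀ i s b, m i (update s i b) = m i s)
    (haloc : ∀ i s b, a i (update s i b) = a i s)
    (hmean : ∀ i s, ∑ b, p (update s i b) * (f b - m i s) = 0)
    (hg : ∀ s, g s = ∑ i, (f (s i) - m i s) * a i s) (b₀ : α) :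
    ∑ s, p s * g s ^ 2
      = ∑ i, ∑ s, p s * ((f (s i) - m i s) * (a i s * (g s - g (update s i b₀)))) := by
  have hexpand : ∀ s, p s * g s ^ 2 = ∑ i, p s * ((f (s i) - m i s) * (a i s * g s)) := by
    intro s
    rw [sq]
    nth_rw 1 [hg s]
    rw [sum_mul, mul_sum]
    exact sum_congr rfl fun i _ => by ring
  simp_rw [hexpand]
  rw [sum_comm]
  refine sum_congr rfl fun i _ => ?_
  have horth := sum_mul_centered_mul_eq_zero p f i (m i) (fun s => a i s * g (update s i b₀))
    (hmloc i) (fun s b => by rw [haloc, update_idem]) (hmean i)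
  simp only [mul_sub, sum_sub_distrib, horth, sub_zero]

end Configurations

lemma abs_sgn_sub_le_two_of_pos {ι : Type*} [Fintype ι] [DecidableEq ι]
    (p : (ι → Bool) → ℝ) (hp0 : ∀ s, 0 ≤ p s) (i : ι) (m : (ι → Bool) → ℝ)
    (hmean : ∀ s, ∑ b, p (update s i b) * (sgn b - m s) = 0) {s : ι → Bool} (hs : 0 < p s) :
    |sgn (s i) - m s| ≤ 2 := by
  have hpos : 0 < ∑ b, p (update s i b) :=
    hs.trans_le <| by
      simpa using single_le_sum (fun b _ => hp0 (update s i b)) (mem_univ (s i))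
  have hm := abs_le_of_sum_mul_sub_eq_zero (fun b => hp0 _) hpos abs_sgn_le_one (hmean s)
  linarith [abs_sub (sgn (s i)) (m s), abs_sgn_le_one (s i)]

theorem stmt17 {n : ℕ} (p : (Fin n → Bool) → ℝ)
    (hp0 : ∀ s, 0 ≤ p s) (hp1 : ∑ s : Fin n → Bool, p s = 1)
    (g : (Fin n → Bool) → ℝ) (L : Fin n → ℝ) (K : ℝ)
    (mcond : Fin n → (Fin n → Bool) → ℝ) (a : Fin n → (Fin n → Bool) → ℝ)
    -- `mcond i` and `a i` depend only on the coordinates other than `i`: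
    (hmloc : ∀ i s b, mcond i (Function.update s i b) = mcond i s)
    (haloc : ∀ i s b, a i (Function.update s i b) = a i s)
    -- `mcond i` is the conditional mean of the `i`-th spin given the others:
    (hmean : ∀ i s, ∑ b : Bool, p (Function.update s i b) * (sgn b - mcond i s) = 0)
    (haK : ∀ i s, |a i s| ≤ K)
    -- bounded differences:
    (hL : ∀ (j : Fin n) (s : Fin n → Bool) (b : Bool),
      |g s - g (Function.update s j b)| ≤ L j)
    (hg : ∀ s, g s = ∑ i, (sgn (s i) - mcond i s) * a i s) :
    ∑ s : Fin n → Bool, p s * (g s) ^ 2 ≤ 2 * K * ∑ i, L i := by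
  have hterm : ∀ i s, p s * ((sgn (s i) - mcond i s) * (a i s * (g s - g (update s i false))))
      ≤ p s * (2 * (K * L i)) := by
    intro i s
    rcases (hp0 s).eq_or_lt with hs | hs
    · simp [← hs]
    calc _ ≤ p s * (|sgn (s i) - mcond i s| * (|a i s| * |g s - g (update s i false)|)) := by
          rw [← abs_mul, ← abs_mul]
          exact mul_le_mul_of_nonneg_left (le_abs_self _) (hp0 s)
      _ ≤ p s * (2 * (K * L i)) := by
          have hK : 0 ≤ K := (abs_nonneg _).trans (haK i s)
          gcongr
          exacts [abs_sgn_sub_le_two_of_pos p hp0 i _ (hmean i) hs, haK i s, hL i s false]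
  calc ∑ s, p s * g s ^ 2
      = ∑ i, ∑ s, p s * ((sgn (s i) - mcond i s) * (a i s * (g s - g (update s i false)))) :=
        sum_mul_sq_eq_sum_sum_mul_sub_update p sgn g mcond a hmloc haloc hmean hg false
    _ ≤ ∑ i, ∑ s, p s * (2 * (K * L i)) :=
        sum_le_sum fun i _ => sum_le_sum fun s _ => hterm i s
    _ = 2 * K * ∑ i, L i := by simp_rw [← sum_mul, hp1, mul_sum]; ring_nf
end
end
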